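/- Let p > 1, α > 1 − 1/p, f ∈ C([−1,1],ℝ) and h ∈ (0,1]. Then V_p(T_h^f − T_0^f) ≤ 4 c(α,p) · S_p(f,h,α)^{1/p} (as an inequality in [0,∞]); equivalently, for every finite dissection 0 = t_0 < t_1 < ... < t_n = 1 of [0,1], Σ_{j=0}^{n−1} |(T_h^f − T_0^f)(t_{j+1}) − (T_h^f − T_0^f)(t_j)|^p ≤ 4^p c(α,p)^p S_p(f,h,α). -/

import Mathlib

open MeasureTheory ProbabilityTheory Filter
open scoped ENNReal NNReal

/-- The `p`-variation functional of a path `g` (restricted to `[0,1]` via dissections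
`0 = t 0 < t 1 < ... < t n = 1`), with values in `[0,∞]`. -/
noncomputable def pVar {V : Type*} [NormedAddCommGroup V] (p : ℝ) (g : ℝ → V) : ℝ≥0∞ :=
  ⨆ (n : ℕ) (t : Fin (n+1) → ℝ) (_ : StrictMono t) (_ : t 0 = 0) (_ : t (Fin.last n) = 1),
    (∑ i : Fin n, (ENNReal.ofReal ‖g (t i.succ) - g (t i.castSucc)‖) ^ p) ^ p⁻¹

/-- The constant `c(α,p) = (∑_{n=1}^∞ n^{-αp/(p-1)})^{(p-1)/p}`. -/
noncomputable def cConst (α p : ℝ) : ℝ :=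
  (∑' n : ℕ, ((n : ℝ) + 1) ^ (-(α * p / (p - 1)))) ^ ((p - 1) / p)

/-- The dyadic sum `S_p(f,h,α)` (with `nh = n(h)`), valued in `[0,∞]`:
`∑_{n=0}^∞ (n+1)^{αp} ∑_{k=0}^{2^{n+n(h)+1}-1} |f((k+1)2^{-(n+n(h))} - 1) - f(k 2^{-(n+n(h))} - 1)|^p`. -/
noncomputable def Sp (f : ℝ → ℝ) (nh : ℕ) (α p : ℝ) : ℝ≥0∞ :=
  ∑' n : ℕ, ENNReal.ofReal (((n : ℝ) + 1) ^ (α * p)) *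
    ∑ k ∈ Finset.range (2 ^ (n + nh + 1)),
      ENNReal.ofReal (|f (((k : ℝ) + 1) / 2 ^ (n + nh) - 1) - f ((k : ℝ) / 2 ^ (n + nh) - 1)| ^ p)

/-!
On an interval `[a, b] ⊆ [-1, 1]` shorter than `2 · 2^{-n(h)}`, approximate `a` from above and
`b` from below by dyadic points of level `m`, starting at a level `m ≥ n(h)` with
`1 ≤ 2^m (b - a) < 2`, where the two approximations are equal or adjacent. Passing from one level
to the next moves each approximation by at most one dyadic interval lying inside `[a, b]`, so
telescoping bounds `|f b - f a|` by a series whose `n`-th term is controlled by level `m + n`.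
Hölder's inequality with the weights `(n + 1)^{±α}` (summable to the power `p/(p-1)` exactly when
`α > 1 - 1/p`) gives `|f b - f a|^p ≤ (2c)^p` times the part of `S_p` carried by the dyadic
intervals inside `[a, b]`, a quantity that is superadditive in the interval.
An increment of `T_h^f - T_0^f` over `[s, t]` splits into two increments of `f` over intervals of
length at most `h`, one inside `[h - 1 + s, h - 1 + t]` and one inside `[-1 + s, -1 + t]`; summing
over a dissection and using superadditivity gives `(4c)^p S_p`.
-/

open Finset Topology

noncomputable def levelSum (f : ℝ → ℝ) (p : ℝ) (m : ℕ) (a b : ℝ) : ℝ≥0∞ :=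
  ∑ k ∈ range (2 ^ (m + 1)),
    if a ≤ (k : ℝ) / 2 ^ m - 1 ∧ ((k : ℝ) + 1) / 2 ^ m - 1 ≤ b then
      ENNReal.ofReal (|f (((k : ℝ) + 1) / 2 ^ m - 1) - f ((k : ℝ) / 2 ^ m - 1)| ^ p)
    else 0

noncomputable def SpOn (f : ℝ → ℝ) (nh : ℕ) (α p a b : ℝ) : ℝ≥0∞ :=
  ∑' q : ℕ, ENNReal.ofReal (((q : ℝ) + 1) ^ (α * p)) * levelSum f p (q + nh) a b

section SpOn

variable {f : ℝ → ℝ} {p : ℝ} {m nh : ℕ} {α : ℝ}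

lemma levelSum_mono {a b a' b' : ℝ} (ha : a' ≤ a) (hb : b ≤ b') :
    levelSum f p m a b ≤ levelSum f p m a' b' := by
  refine sum_le_sum fun k _ => ?_
  split_ifs with h h'
  · exact le_rfl
  · exact absurd ⟨ha.trans h.1, h.2.trans hb⟩ h'
  all_goals exact zero_le

lemma levelSum_add_le {a b c : ℝ} (hac : a ≤ c) (hcb : c ≤ b) :
    levelSum f p m a c + levelSum f p m c b ≤ levelSum f p m a b := by
  rw [levelSum, levelSum, ← sum_add_distrib]
  refine sum_le_sum fun k _ => ?_
  have hk : (k : ℝ) / 2 ^ m - 1 < ((k : ℝ) + 1) / 2 ^ m - 1 := by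
    gcongr; linarith
  by_cases h₁ : a ≤ (k : ℝ) / 2 ^ m - 1 ∧ ((k : ℝ) + 1) / 2 ^ m - 1 ≤ c
  · have h₂ : ¬(c ≤ (k : ℝ) / 2 ^ m - 1 ∧ ((k : ℝ) + 1) / 2 ^ m - 1 ≤ b) :=
      fun h₂ => by linarith [h₁.2, h₂.1]
    rw [if_pos h₁, if_neg h₂, if_pos ⟨h₁.1, h₁.2.trans hcb⟩, add_zero]
  · by_cases h₂ : c ≤ (k : ℝ) / 2 ^ m - 1 ∧ ((k : ℝ) + 1) / 2 ^ m - 1 ≤ b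
    · rw [if_neg h₁, if_pos h₂, if_pos ⟨hac.trans h₂.1, h₂.2⟩, zero_add]
    · rw [if_neg h₁, if_neg h₂, add_zero]
      exact zero_le

lemma SpOn_le_Sp (a b : ℝ) : SpOn f nh α p a b ≤ Sp f nh α p := by
  refine ENNReal.tsum_le_tsum fun q => mul_le_mul_right (sum_le_sum fun k _ => ?_) _
  split_ifs
  exacts [le_rfl, zero_le]

lemma SpOn_mono {a b a' b' : ℝ} (ha : a' ≤ a) (hb : b ≤ b') :
    SpOn f nh α p a b ≤ SpOn f nh α p a' b' :=
  ENNReal.tsum_le_tsum fun _ => mul_le_mul_right (levelSum_mono ha hb) _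

lemma SpOn_add_le {a b c : ℝ} (hac : a ≤ c) (hcb : c ≤ b) :
    SpOn f nh α p a c + SpOn f nh α p c b ≤ SpOn f nh α p a b := by
  rw [SpOn, SpOn, ← ENNReal.tsum_add]
  exact ENNReal.tsum_le_tsum fun _ => (mul_add _ _ _).symm.le.trans
    (mul_le_mul_right (levelSum_add_le hac hcb) _)

lemma sum_SpOn_le_of_monotone {n : ℕ} {t : Fin (n + 1) → ℝ} (ht : Monotone t) :
    ∑ i : Fin n, SpOn f nh α p (t i.castSucc) (t i.succ) ≤
      SpOn f nh α p (t 0) (t (Fin.last n)) := by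
  induction n with
  | zero => simp
  | succ n ih =>
    rw [Fin.sum_univ_castSucc]
    have hinit := ih (t := t ∘ Fin.castSucc) (ht.comp Fin.strictMono_castSucc.monotone)
    simp only [Function.comp_apply, ← Fin.succ_castSucc, Fin.castSucc_zero] at hinit
    refine (add_le_add_left hinit _).trans (SpOn_add_le (ht (Fin.zero_le _)) (ht ?_))
    exact Fin.castSucc_lt_succ.le

end SpOn

def IsDyadicStep (m : ℕ) (u v : ℝ) : Prop :=
  u = v ∨ ∃ k : ℕ, u = k / 2 ^ m - 1 ∧ v = (k + 1) / 2 ^ m - 1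

section DyadicStep

variable {m : ℕ} {u v : ℝ}

lemma IsDyadicStep.le (h : IsDyadicStep m u v) : u ≤ v := by
  rcases h with rfl | ⟨k, rfl, rfl⟩
  · rfl
  · gcongr; linarith

lemma isDyadicStep_of_le_of_le_succ {i k : ℕ} (hik : i ≤ k) (hki : k ≤ i + 1) :
    IsDyadicStep m (i / 2 ^ m - 1) (k / 2 ^ m - 1) := by
  obtain rfl | rfl : k = i ∨ k = i + 1 := by omega
  · exact .inl rfl
  · exact .inr ⟨i, rfl, by push_cast; ring⟩

lemma IsDyadicStep.rpow_le_levelSum {f : ℝ → ℝ} {p a b : ℝ} (h : IsDyadicStep m u v)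
    (hp : 0 < p) (hau : a ≤ u) (hvb : v ≤ b) (hb : b ≤ 1) :
    ENNReal.ofReal |f v - f u| ^ p ≤ levelSum f p m a b := by
  rcases h with rfl | ⟨k, rfl, rfl⟩
  · simp [ENNReal.zero_rpow_of_pos hp]
  have hk : k ∈ range (2 ^ (m + 1)) := by
    have : ((k : ℝ) + 1) ≤ 2 ^ (m + 1) := by
      rw [pow_succ, mul_comm, ← div_le_iff₀ (by positivity)]; linarith
    rw [mem_range, ← Nat.cast_lt (α := ℝ)]; push_cast; linarith
  rw [ENNReal.ofReal_rpow_of_nonneg (abs_nonneg _) hp.le]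
  unfold levelSum
  refine (single_le_sum (fun _ _ => zero_le) hk).trans' ?_
  rw [if_pos ⟨hau, hvb⟩]

end DyadicStep

noncomputable def dyadicCeil (a : ℝ) (m : ℕ) : ℝ := ⌈2 ^ m * (a + 1)⌉₊ / 2 ^ m - 1

noncomputable def dyadicFloor (b : ℝ) (m : ℕ) : ℝ := ⌊2 ^ m * (b + 1)⌋₊ / 2 ^ m - 1

section DyadicApprox

variable {a b : ℝ} {m : ℕ}

lemma le_dyadicCeil : a ≤ dyadicCeil a m := by
  have := Nat.le_ceil (2 ^ m * (a + 1))
  rw [dyadicCeil, le_sub_iff_add_le, le_div_iff₀ (by positivity)]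
  linarith

lemma dyadicCeil_lt (ha : -1 ≤ a) : dyadicCeil a m < a + (2 ^ m)⁻¹ := by
  have := Nat.ceil_lt_add_one (mul_nonneg (by positivity) (by linarith) : 0 ≤ 2 ^ m * (a + 1))
  rw [dyadicCeil, sub_lt_iff_lt_add, div_lt_iff₀ (by positivity)]
  field_simp
  linarith

lemma dyadicFloor_le (hb : -1 ≤ b) : dyadicFloor b m ≤ b := by
  have := Nat.floor_le (mul_nonneg (by positivity) (by linarith) : 0 ≤ 2 ^ m * (b + 1))
  rw [dyadicFloor, sub_le_iff_le_add, div_le_iff₀ (by positivity)]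
  linarith

lemma sub_lt_dyadicFloor : b - (2 ^ m)⁻¹ < dyadicFloor b m := by
  have := Nat.lt_floor_add_one (2 ^ m * (b + 1))
  rw [dyadicFloor, lt_sub_iff_add_lt, lt_div_iff₀ (by positivity)]
  field_simp
  linarith

lemma tendsto_dyadicCeil (ha : -1 ≤ a) : Tendsto (dyadicCeil a) atTop (𝓝 a) := by
  have hup : Tendsto (fun m : ℕ => a + (2 ^ m)⁻¹) atTop (𝓝 a) := by
    simpa using tendsto_const_nhds.add
      (tendsto_inv_atTop_zero.comp (tendsto_pow_atTop_atTop_of_one_lt (one_lt_two (α := ℝ))))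
  exact tendsto_of_tendsto_of_tendsto_of_le_of_le tendsto_const_nhds hup
    (fun _ => le_dyadicCeil) (fun _ => (dyadicCeil_lt ha).le)

lemma tendsto_dyadicFloor (hb : -1 ≤ b) : Tendsto (dyadicFloor b) atTop (𝓝 b) := by
  have hlow : Tendsto (fun m : ℕ => b - (2 ^ m)⁻¹) atTop (𝓝 b) := by
    simpa using tendsto_const_nhds.sub
      (tendsto_inv_atTop_zero.comp (tendsto_pow_atTop_atTop_of_one_lt (one_lt_two (α := ℝ))))
  exact tendsto_of_tendsto_of_tendsto_of_le_of_le hlow tendsto_const_nhds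
    (fun _ => sub_lt_dyadicFloor.le) (fun _ => dyadicFloor_le hb)

lemma isDyadicStep_dyadicCeil_succ (ha : -1 ≤ a) (m : ℕ) :
    IsDyadicStep (m + 1) (dyadicCeil a (m + 1)) (dyadicCeil a m) := by
  have h0 : 0 ≤ 2 ^ m * (a + 1) := mul_nonneg (by positivity) (by linarith)
  have hc := Nat.le_ceil (2 ^ m * (a + 1))
  have hc' := Nat.ceil_lt_add_one h0
  have hd := Nat.le_ceil (2 ^ (m + 1) * (a + 1))
  rw [pow_succ] at hd
  have hdouble :
      dyadicCeil a m = ((2 * ⌈2 ^ m * (a + 1)⌉₊ : ℕ) : ℝ) / 2 ^ (m + 1) - 1 := by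
    rw [dyadicCeil]; push_cast; rw [pow_succ]; field_simp
  rw [hdouble, dyadicCeil]
  refine isDyadicStep_of_le_of_le_succ (Nat.ceil_le.2 ?_) ?_
  · push_cast; rw [pow_succ]; nlinarith
  · suffices 2 * ⌈2 ^ m * (a + 1)⌉₊ < ⌈2 ^ (m + 1) * (a + 1)⌉₊ + 2 by omega
    rw [← Nat.cast_lt (α := ℝ)]; push_cast; rw [pow_succ]; nlinarith

lemma isDyadicStep_dyadicFloor_succ (hb : -1 ≤ b) (m : ℕ) :
    IsDyadicStep (m + 1) (dyadicFloor b m) (dyadicFloor b (m + 1)) := by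
  have h0 : 0 ≤ 2 ^ m * (b + 1) := mul_nonneg (by positivity) (by linarith)
  have hd := Nat.floor_le h0
  have hd' := Nat.lt_floor_add_one (2 ^ m * (b + 1))
  have he := Nat.floor_le (mul_nonneg (by positivity) (by linarith) : 0 ≤ 2 ^ (m + 1) * (b + 1))
  rw [pow_succ] at he
  have hdouble :
      dyadicFloor b m = ((2 * ⌊2 ^ m * (b + 1)⌋₊ : ℕ) : ℝ) / 2 ^ (m + 1) - 1 := by
    rw [dyadicFloor]; push_cast; rw [pow_succ]; field_simp
  rw [hdouble, dyadicFloor]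
  refine isDyadicStep_of_le_of_le_succ (Nat.le_floor ?_) ?_
  · push_cast; rw [pow_succ]; nlinarith
  · suffices ⌊2 ^ (m + 1) * (b + 1)⌋₊ < 2 * ⌊2 ^ m * (b + 1)⌋₊ + 2 by omega
    rw [← Nat.cast_lt (α := ℝ)]; push_cast; rw [pow_succ]; nlinarith

lemma isDyadicStep_dyadicCeil_dyadicFloor (ha : -1 ≤ a) (h₁ : 1 ≤ 2 ^ m * (b - a))
    (h₂ : 2 ^ m * (b - a) < 2) : IsDyadicStep m (dyadicCeil a m) (dyadicFloor b m) := by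
  have h0 : 0 ≤ 2 ^ m * (a + 1) := mul_nonneg (by positivity) (by linarith)
  have hc := Nat.le_ceil (2 ^ m * (a + 1))
  have hc' := Nat.ceil_lt_add_one h0
  have hd := Nat.floor_le (by nlinarith : 0 ≤ 2 ^ m * (b + 1))
  refine isDyadicStep_of_le_of_le_succ (Nat.le_floor (by linarith)) ?_
  suffices ⌊2 ^ m * (b + 1)⌋₊ < ⌈2 ^ m * (a + 1)⌉₊ + 2 by omega
  rw [← Nat.cast_lt (α := ℝ)]; push_cast; linarith

end DyadicApprox

lemma exists_one_le_two_pow_mul_lt_two {r : ℝ} {nh : ℕ} (hr : 0 < r)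
    (hrn : r < 2 * (2 ^ nh)⁻¹) :
    ∃ m, nh ≤ m ∧ 1 ≤ 2 ^ m * r ∧ 2 ^ m * r < 2 := by
  obtain ⟨n, hn₁, hn₂⟩ := exists_mem_Ico_zpow hr one_lt_two
  have hn : n ≤ -nh := by
    have : (2 : ℝ) ^ n < 2 ^ (1 - (nh : ℤ)) := by
      rw [zpow_sub₀ two_ne_zero, zpow_one, zpow_natCast, div_eq_mul_inv]; linarith
    have := (zpow_lt_zpow_iff_right₀ one_lt_two).1 this
    omega
  obtain ⟨m, hm⟩ : ∃ m : ℕ, n = -m := ⟨(-n).toNat, by omega⟩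
  subst hm
  refine ⟨m, by omega, ?_, ?_⟩
  · rw [zpow_neg, zpow_natCast] at hn₁
    rwa [← inv_mul_le_iff₀ (by positivity), mul_one]
  · rw [zpow_add₀ two_ne_zero, zpow_neg, zpow_one, zpow_natCast] at hn₂
    rwa [← lt_div_iff₀' (by positivity), div_eq_inv_mul]

lemma ENNReal.inner_le_Lp_mul_Lq_tsum {ι : Type*} {p q : ℝ} (hpq : p.HolderConjugate q)
    (u v : ι → ℝ≥0∞) :
    ∑' i, u i * v i ≤ (∑' i, u i ^ p) ^ (1 / p) * (∑' i, v i ^ q) ^ (1 / q) := by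
  rw [ENNReal.tsum_eq_iSup_sum]
  refine iSup_le fun s => (ENNReal.inner_le_Lp_mul_Lq s u v hpq).trans ?_
  gcongr
  exacts [hpq.one_div_pos.le, ENNReal.sum_le_tsum s, hpq.symm.one_div_pos.le, ENNReal.sum_le_tsum s]

section Holder

variable {p α : ℝ}

lemma summable_cConst (hp : 1 < p) (hα : 1 - 1 / p < α) :
    Summable fun n : ℕ => ((n : ℝ) + 1) ^ (-(α * p / (p - 1))) := by
  have hp1 : 0 < p - 1 := by linarith
  have hr : 1 < α * p / (p - 1) := by
    rw [lt_div_iff₀ hp1]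
    have := mul_lt_mul_of_pos_right hα (by linarith : 0 < p)
    field_simp at this ⊢
    linarith
  simpa using (summable_nat_add_iff 1).2
    (Real.summable_nat_rpow.2 (by linarith : -(α * p / (p - 1)) < -1))

lemma ofReal_cConst (hp : 1 < p) (hα : 1 - 1 / p < α) :
    ENNReal.ofReal (cConst α p) =
      (∑' n : ℕ, ENNReal.ofReal (((n : ℝ) + 1) ^ (-α)) ^ (p / (p - 1))) ^
        (1 / (p / (p - 1))) := by
  have hq : 0 ≤ p / (p - 1) := div_nonneg (by linarith) (by linarith)
  have hterm (n : ℕ) : ENNReal.ofReal (((n : ℝ) + 1) ^ (-α)) ^ (p / (p - 1)) =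
      ENNReal.ofReal (((n : ℝ) + 1) ^ (-(α * p / (p - 1)))) := by
    rw [ENNReal.ofReal_rpow_of_nonneg (by positivity) hq, ← Real.rpow_mul (by positivity)]
    ring_nf
  rw [tsum_congr hterm, ← ENNReal.ofReal_tsum_of_nonneg (fun n => by positivity)
    (summable_cConst hp hα), ENNReal.ofReal_rpow_of_nonneg (tsum_nonneg fun n => by positivity)
    (by positivity), one_div_div, cConst]

lemma tsum_le_ofReal_cConst_mul (hp : 1 < p) (hα : 1 - 1 / p < α) (D : ℕ → ℝ≥0∞) :
    ∑' n, D n ≤ ENNReal.ofReal (cConst α p) *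
      (∑' n : ℕ, ENNReal.ofReal (((n : ℝ) + 1) ^ (α * p)) * D n ^ p) ^ (1 / p) := by
  have hpq : p.HolderConjugate (p / (p - 1)) := (Real.holderConjugate_iff_eq_conjExponent hp).2 rfl
  set w : ℕ → ℝ≥0∞ := fun n => ENNReal.ofReal (((n : ℝ) + 1) ^ (-α))
  set W : ℕ → ℝ≥0∞ := fun n => ENNReal.ofReal (((n : ℝ) + 1) ^ α)
  have hsplit (n : ℕ) : D n = w n * (W n * D n) := by
    rw [← mul_assoc, ← ENNReal.ofReal_mul (by positivity), ← Real.rpow_add (by positivity),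
      neg_add_cancel, Real.rpow_zero, ENNReal.ofReal_one, one_mul]
  have hweight (n : ℕ) :
      (W n * D n) ^ p = ENNReal.ofReal (((n : ℝ) + 1) ^ (α * p)) * D n ^ p := by
    rw [ENNReal.mul_rpow_of_nonneg _ _ (by linarith), ENNReal.ofReal_rpow_of_nonneg (by positivity)
      (by linarith), ← Real.rpow_mul (by positivity)]
  calc ∑' n, D n = ∑' n, w n * (W n * D n) := tsum_congr hsplit
    _ ≤ _ := ENNReal.inner_le_Lp_mul_Lq_tsum hpq.symm _ _
    _ = _ := by rw [← ofReal_cConst hp hα, tsum_congr hweight]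

end Holder

noncomputable def chainIncr (f : ℝ → ℝ) (x y : ℕ → ℝ) : ℕ → ℝ≥0∞
  | 0 => ENNReal.ofReal |f (y 0) - f (x 0)|
  | n + 1 => ENNReal.ofReal |f (y (n + 1)) - f (y n)| + ENNReal.ofReal |f (x n) - f (x (n + 1))|

section Chaining

variable {f : ℝ → ℝ} {x y : ℕ → ℝ} {p a b : ℝ}

lemma ofReal_abs_sub_le_tsum_chainIncr (hx : Tendsto (f ∘ x) atTop (𝓝 (f a)))
    (hy : Tendsto (f ∘ y) atTop (𝓝 (f b))) :
    ENNReal.ofReal |f b - f a| ≤ ∑' n, chainIncr f x y n := by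
  have hpartial (N : ℕ) :
      ENNReal.ofReal |f (y N) - f (x N)| ≤ ∑ n ∈ range (N + 1), chainIncr f x y n := by
    induction N with
    | zero => simp [chainIncr]
    | succ N ih =>
      rw [sum_range_succ, chainIncr, ← ENNReal.ofReal_add (by positivity) (by positivity)]
      calc ENNReal.ofReal |f (y (N + 1)) - f (x (N + 1))|
          ≤ ENNReal.ofReal |f (y N) - f (x N)| +
              ENNReal.ofReal (|f (y (N + 1)) - f (y N)| + |f (x N) - f (x (N + 1))|) := by
            rw [← ENNReal.ofReal_add (by positivity) (by positivity)]
            refine ENNReal.ofReal_le_ofReal ?_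
            have := abs_add_three (f (y N) - f (x N)) (f (y (N + 1)) - f (y N))
              (f (x N) - f (x (N + 1)))
            ring_nf at this ⊢
            linarith
        _ ≤ _ := add_le_add_left ih _
  have hlim : Tendsto (fun N => ENNReal.ofReal |f (y N) - f (x N)|) atTop
      (𝓝 (ENNReal.ofReal |f b - f a|)) :=
    (ENNReal.continuous_ofReal.tendsto _).comp (hy.sub hx).abs
  exact le_of_tendsto' hlim fun N => (hpartial N).trans (ENNReal.sum_le_tsum _)

lemma chainIncr_rpow_le {m₀ : ℕ} (hp : 0 < p) (hb : b ≤ 1) (hx : ∀ n, x n ∈ Set.Icc a b)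
    (hy : ∀ n, y n ∈ Set.Icc a b) (h₀ : IsDyadicStep m₀ (x 0) (y 0))
    (hxs : ∀ n, IsDyadicStep (m₀ + n + 1) (x (n + 1)) (x n))
    (hys : ∀ n, IsDyadicStep (m₀ + n + 1) (y n) (y (n + 1))) (n : ℕ) :
    chainIncr f x y n ^ p ≤ 2 ^ p * levelSum f p (m₀ + n) a b := by
  cases n with
  | zero =>
    exact (h₀.rpow_le_levelSum hp (hx 0).1 (hy 0).2 hb).trans
      (le_mul_of_one_le_left zero_le (ENNReal.one_le_rpow one_le_two hp))
  | succ n =>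
    have hX := (hxs n).rpow_le_levelSum (f := f) hp (hx (n + 1)).1 (hx n).2 hb
    have hY := (hys n).rpow_le_levelSum (f := f) hp (hy n).1 (hy (n + 1)).2 hb
    calc chainIncr f x y (n + 1) ^ p
        ≤ (2 * max (ENNReal.ofReal |f (y (n + 1)) - f (y n)|)
            (ENNReal.ofReal |f (x n) - f (x (n + 1))|)) ^ p := by
          gcongr
          rw [two_mul]
          exact add_le_add (le_max_left _ _) (le_max_right _ _)
      _ = 2 ^ p * max (ENNReal.ofReal |f (y (n + 1)) - f (y n)| ^ p)
            (ENNReal.ofReal |f (x n) - f (x (n + 1))| ^ p) := by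
          rw [ENNReal.mul_rpow_of_nonneg _ _ hp.le, (ENNReal.monotone_rpow_of_nonneg hp.le).map_max]
      _ ≤ _ := by
          gcongr
          exact max_le hY hX

end Chaining

section ChainBound

variable {f : ℝ → ℝ} {p α a b : ℝ} {nh : ℕ}

lemma rpow_abs_sub_le_tsum_levelSum (hp : 1 < p) (hα : 1 - 1 / p < α)
    (hf : ContinuousOn f (Set.Icc a b)) (ha : -1 ≤ a) (hab : a ≤ b) (hb : b ≤ 1) {m₀ : ℕ}
    (h₀ : IsDyadicStep m₀ (dyadicCeil a m₀) (dyadicFloor b m₀)) :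
    ENNReal.ofReal |f b - f a| ^ p ≤ (2 * ENNReal.ofReal (cConst α p)) ^ p *
      ∑' n : ℕ, ENNReal.ofReal (((n : ℝ) + 1) ^ (α * p)) * levelSum f p (m₀ + n) a b := by
  have hp0 : 0 < p := by linarith
  have hb' : -1 ≤ b := ha.trans hab
  set x : ℕ → ℝ := fun n => dyadicCeil a (m₀ + n)
  set y : ℕ → ℝ := fun n => dyadicFloor b (m₀ + n)
  have hxs (n : ℕ) : IsDyadicStep (m₀ + n + 1) (x (n + 1)) (x n) :=
    isDyadicStep_dyadicCeil_succ ha (m₀ + n)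
  have hys (n : ℕ) : IsDyadicStep (m₀ + n + 1) (y n) (y (n + 1)) :=
    isDyadicStep_dyadicFloor_succ hb' (m₀ + n)
  have hxy₀ : x 0 ≤ y 0 := h₀.le
  have hx (n : ℕ) : x n ∈ Set.Icc a b :=
    ⟨le_dyadicCeil, (antitone_nat_of_succ_le (fun n => (hxs n).le) n.zero_le).trans
      (hxy₀.trans (dyadicFloor_le hb'))⟩
  have hy (n : ℕ) : y n ∈ Set.Icc a b :=
    ⟨(le_dyadicCeil : a ≤ x 0).trans (hxy₀.trans
      (monotone_nat_of_le_succ (fun n => (hys n).le) n.zero_le)), dyadicFloor_le hb'⟩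
  have hshift : Tendsto (m₀ + ·) atTop atTop :=
    tendsto_atTop_mono (Nat.le_add_left · m₀) tendsto_id
  have hfx : Tendsto (f ∘ x) atTop (𝓝 (f a)) :=
    (hf a ⟨le_rfl, hab⟩).tendsto.comp (tendsto_nhdsWithin_iff.2
      ⟨(tendsto_dyadicCeil ha).comp hshift, Eventually.of_forall hx⟩)
  have hfy : Tendsto (f ∘ y) atTop (𝓝 (f b)) :=
    (hf b ⟨hab, le_rfl⟩).tendsto.comp (tendsto_nhdsWithin_iff.2
      ⟨(tendsto_dyadicFloor hb').comp hshift, Eventually.of_forall hy⟩)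
  calc ENNReal.ofReal |f b - f a| ^ p
      ≤ (ENNReal.ofReal (cConst α p) *
          (∑' n : ℕ, ENNReal.ofReal (((n : ℝ) + 1) ^ (α * p)) * chainIncr f x y n ^ p) ^
            (1 / p)) ^ p := by
        gcongr
        exact (ofReal_abs_sub_le_tsum_chainIncr hfx hfy).trans (tsum_le_ofReal_cConst_mul hp hα _)
    _ = ENNReal.ofReal (cConst α p) ^ p *
          ∑' n : ℕ, ENNReal.ofReal (((n : ℝ) + 1) ^ (α * p)) * chainIncr f x y n ^ p := by
        rw [ENNReal.mul_rpow_of_nonneg _ _ hp0.le, ← ENNReal.rpow_mul, one_div,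
          inv_mul_cancel₀ hp0.ne', ENNReal.rpow_one]
    _ ≤ ENNReal.ofReal (cConst α p) ^ p *
          ∑' n : ℕ, ENNReal.ofReal (((n : ℝ) + 1) ^ (α * p)) *
            (2 ^ p * levelSum f p (m₀ + n) a b) := by
        gcongr with n
        exact chainIncr_rpow_le hp0 hb hx hy h₀ hxs hys n
    _ = _ := by
        simp_rw [mul_left_comm _ (2 ^ p : ℝ≥0∞), ENNReal.tsum_mul_left,
          ENNReal.mul_rpow_of_nonneg _ _ hp0.le]
        ring

lemma tsum_levelSum_add_le_SpOn (hαp : 0 ≤ α * p) (s : ℕ) :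
    ∑' n : ℕ, ENNReal.ofReal (((n : ℝ) + 1) ^ (α * p)) * levelSum f p (nh + s + n) a b ≤
      SpOn f nh α p a b := by
  calc _ ≤ ∑' n : ℕ, ENNReal.ofReal ((((s + n : ℕ) : ℝ) + 1) ^ (α * p)) *
          levelSum f p (s + n + nh) a b := by
        refine ENNReal.tsum_le_tsum fun n => ?_
        rw [show nh + s + n = s + n + nh by ring]
        gcongr
        linarith [(s.cast_nonneg : (0 : ℝ) ≤ s)]
    _ ≤ SpOn f nh α p a b := ENNReal.tsum_comp_le_tsum_of_injective (add_right_injective s)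
          fun q => ENNReal.ofReal (((q : ℝ) + 1) ^ (α * p)) * levelSum f p (q + nh) a b

lemma rpow_abs_sub_le_SpOn (hp : 1 < p) (hα : 1 - 1 / p < α) (hf : ContinuousOn f (Set.Icc a b))
    (ha : -1 ≤ a) (hab : a ≤ b) (hb : b ≤ 1) (hba : b - a < 2 * (2 ^ nh)⁻¹) :
    ENNReal.ofReal |f b - f a| ^ p ≤
      (2 * ENNReal.ofReal (cConst α p)) ^ p * SpOn f nh α p a b := by
  rcases hab.eq_or_lt with rfl | hlt
  · simp [ENNReal.zero_rpow_of_pos (by linarith : 0 < p)]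
  have hαp : 0 ≤ α * p := by
    have : 1 / p < 1 := (div_lt_one (by linarith)).2 hp
    nlinarith
  obtain ⟨m, hm, h₁, h₂⟩ := exists_one_le_two_pow_mul_lt_two (sub_pos.2 hlt) hba
  obtain ⟨s, rfl⟩ := Nat.exists_eq_add_of_le hm
  exact (rpow_abs_sub_le_tsum_levelSum hp hα hf ha hab hb
    (isDyadicStep_dyadicCeil_dyadicFloor ha h₁ h₂)).trans
    (mul_le_mul_right (tsum_levelSum_add_le_SpOn hαp s) _)

end ChainBound

lemma ofReal_rpow_le_of_le_abs_add_abs {p z u v : ℝ} {X Y : ℝ≥0∞} (hp : 1 ≤ p)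
    (h : z ≤ |u| + |v|) (hu : ENNReal.ofReal |u| ^ p ≤ X) (hv : ENNReal.ofReal |v| ^ p ≤ Y) :
    ENNReal.ofReal z ^ p ≤ 2 ^ (p - 1) * (X + Y) :=
  calc ENNReal.ofReal z ^ p ≤ (ENNReal.ofReal |u| + ENNReal.ofReal |v|) ^ p := by
        rw [← ENNReal.ofReal_add (abs_nonneg _) (abs_nonneg _)]
        exact ENNReal.rpow_le_rpow (ENNReal.ofReal_le_ofReal h) (by linarith)
    _ ≤ 2 ^ (p - 1) * (ENNReal.ofReal |u| ^ p + ENNReal.ofReal |v| ^ p) :=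
        ENNReal.rpow_add_le_mul_rpow_add_rpow _ _ hp
    _ ≤ _ := by gcongr

section Frame

variable {f : ℝ → ℝ} {p α h : ℝ} {nh : ℕ}

lemma frame_incr_rpow_le (hp : 1 < p) (hα : 1 - 1 / p < α) (hf : ContinuousOn f (Set.Icc (-1) 1))
    (h0 : 0 < h) (h1 : h ≤ 1) (hn : h < 2 * (2 ^ nh)⁻¹) {s t : ℝ} (hs : 0 ≤ s)
    (hst : s ≤ t) (ht : t ≤ 1) :
    ENNReal.ofReal ‖(f (h - 1 + t) - f (-1 + t)) - (f (h - 1 + s) - f (-1 + s))‖ ^ p ≤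
      2 ^ (p - 1) * ((2 * ENNReal.ofReal (cConst α p)) ^ p *
        SpOn f nh α p (h - 1 + s) (h - 1 + t) +
        (2 * ENNReal.ofReal (cConst α p)) ^ p * SpOn f nh α p (-1 + s) (-1 + t)) := by
  have hchain {a b : ℝ} (ha : -1 ≤ a) (hab : a ≤ b) (hb : b ≤ 1) (hba : b - a ≤ h) :=
    rpow_abs_sub_le_SpOn (f := f) hp hα (hf.mono (Set.Icc_subset_Icc ha hb)) ha hab hb
      (hba.trans_lt hn)
  rw [Real.norm_eq_abs]
  by_cases hcase : t - s ≤ h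
  · refine ofReal_rpow_le_of_le_abs_add_abs hp.le ?_
      (hchain (by linarith) (by linarith) (by linarith) (by linarith))
      (hchain (by linarith) (by linarith) (by linarith) (by linarith))
    calc _ = |(f (h - 1 + t) - f (h - 1 + s)) - (f (-1 + t) - f (-1 + s))| := by ring_nf
      _ ≤ _ := abs_sub _ _
  · replace hcase := (not_le.1 hcase).le
    -- `[-1 + t, h - 1 + t] ⊆ [h - 1 + s, h - 1 + t]`, `[-1 + s, h - 1 + s] ⊆ [-1 + s, -1 + t]`
    refine ofReal_rpow_le_of_le_abs_add_abs hp.le (abs_sub _ _)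
      ((hchain (by linarith) (by linarith) (by linarith) (by linarith)).trans ?_)
      ((hchain (by linarith) (by linarith) (by linarith) (by linarith)).trans ?_)
    all_goals exact mul_le_mul_right (SpOn_mono (by linarith) (by linarith)) _

lemma sum_frame_incr_rpow_le (hp : 1 < p) (hα : 1 - 1 / p < α)
    (hf : ContinuousOn f (Set.Icc (-1) 1)) (h0 : 0 < h) (h1 : h ≤ 1) (hn : h < 2 * (2 ^ nh)⁻¹)
    {n : ℕ} {t : Fin (n + 1) → ℝ} (ht : Monotone t) (ht0 : 0 ≤ t 0)
    (ht1 : t (Fin.last n) ≤ 1) :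
    ∑ i : Fin n, ENNReal.ofReal ‖(f (h - 1 + t i.succ) - f (-1 + t i.succ)) -
        (f (h - 1 + t i.castSucc) - f (-1 + t i.castSucc))‖ ^ p ≤
      (4 * ENNReal.ofReal (cConst α p)) ^ p * Sp f nh α p := by
  set K := (2 * ENNReal.ofReal (cConst α p)) ^ p
  have hshift (σ : ℝ) :
      ∑ i : Fin n, SpOn f nh α p (σ + t i.castSucc) (σ + t i.succ) ≤ Sp f nh α p :=
    (sum_SpOn_le_of_monotone (t := fun i => σ + t i)
      fun _ _ hij => by dsimp only; linarith [ht hij]).trans (SpOn_le_Sp _ _)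
  have htwo : (2 : ℝ≥0∞) ^ (p - 1) * 2 * K = (4 * ENNReal.ofReal (cConst α p)) ^ p := by
    have h2 : (2 : ℝ≥0∞) ^ (p - 1) * 2 ^ (1 : ℝ) = 2 ^ p := by
      rw [← ENNReal.rpow_add _ _ two_ne_zero ENNReal.ofNat_ne_top, sub_add_cancel]
    rw [ENNReal.rpow_one] at h2
    rw [h2, ← ENNReal.mul_rpow_of_nonneg _ _ (by linarith), ← mul_assoc]
    norm_num
  calc _ ≤ ∑ i : Fin n, 2 ^ (p - 1) *
          (K * SpOn f nh α p (h - 1 + t i.castSucc) (h - 1 + t i.succ) +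
            K * SpOn f nh α p (-1 + t i.castSucc) (-1 + t i.succ)) :=
        sum_le_sum fun i _ => frame_incr_rpow_le hp hα hf h0 h1 hn
          (ht0.trans (ht (Fin.zero_le _))) (ht Fin.castSucc_lt_succ.le)
          ((ht (Fin.le_last _)).trans ht1)
    _ ≤ 2 ^ (p - 1) * (K * Sp f nh α p + K * Sp f nh α p) := by
        rw [← mul_sum, sum_add_distrib, ← mul_sum, ← mul_sum]
        gcongr <;> exact hshift _
    _ = _ := by rw [← htwo]; ring

end Frame

theorem frame_pvar_bound_general (p α : ℝ) (hp : 1 < p) (hα : 1 - 1/p < α)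
    (f : ℝ → ℝ) (hf : ContinuousOn f (Set.Icc (-1) 1))
    (h : ℝ) (h0 : 0 < h) (h1 : h ≤ 1)
    (nh : ℕ) (hn2 : h < (2:ℝ) ^ (-(nh:ℤ) + 1)) :
    pVar p (fun u => f (h - 1 + u) - f (-1 + u)) ≤
      ENNReal.ofReal (4 * cConst α p) * (Sp f nh α p) ^ (1/p) := by
  have hp0 : 0 < p := by linarith
  have hn : h < 2 * (2 ^ nh)⁻¹ := by
    rwa [zpow_add₀ two_ne_zero, zpow_neg, zpow_one, zpow_natCast, mul_comm] at hn2
  refine iSup_le fun n => iSup_le fun t => iSup_le fun ht => iSup_le fun ht0 =>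
    iSup_le fun ht1 => ?_
  calc _ ≤ ((4 * ENNReal.ofReal (cConst α p)) ^ p * Sp f nh α p) ^ p⁻¹ :=
        ENNReal.rpow_le_rpow (sum_frame_incr_rpow_le hp hα hf h0 h1 hn ht.monotone ht0.ge ht1.le)
          (inv_nonneg.2 hp0.le)
    _ = _ := by
        rw [ENNReal.mul_rpow_of_nonneg _ _ (inv_nonneg.2 hp0.le), ← ENNReal.rpow_mul,
          mul_inv_cancel₀ hp0.ne', ENNReal.rpow_one, one_div,
          ENNReal.ofReal_mul (by norm_num), ENNReal.ofReal_ofNat]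

/-- `p`-variation bound for the frame increments: for `p > 1`, `α > 1 - 1/p`, `f ∈ C([-1,1])`
and `h ∈ (0,1]`, with `nh = n(h)` the unique integer with `2^{-nh} ≤ h < 2^{-nh+1}`,
`V_p(T_h^f - T_0^f) ≤ 4 c(α,p) S_p(f,h,α)^{1/p}` in `[0,∞]`. -/
theorem frame_pvar_bound (p α : ℝ) (hp : 1 < p) (hα : 1 - 1/p < α)
    (f : ℝ → ℝ) (hf : ContinuousOn f (Set.Icc (-1) 1))
    (h : ℝ) (h0 : 0 < h) (h1 : h ≤ 1)
    (nh : ℕ) (hn1 : (2:ℝ) ^ (-(nh:ℤ)) ≤ h) (hn2 : h < (2:ℝ) ^ (-(nh:ℤ) + 1)) :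
    pVar p (fun u => f (h - 1 + u) - f (-1 + u)) ≤
      ENNReal.ofReal (4 * cConst α p) * (Sp f nh α p) ^ (1/p) :=
  frame_pvar_bound_general p α hp hα f hf h h0 h1 nh hn2
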